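/- arXiv:1704.03661 — 2 statements merged into one kernel-verified Lean document; each statement's English description precedes it below -/
import Mathlib

section
/- If β ∈ M_N(o_r) is regular (its reduction mod p is a regular matrix over F_q), then the centralizer of β in GL_N(o_r) equals the unit group of the subring o_r[β] generated by β; in particular this centralizer is abelian. -/
/-!
Over the residue field `k`, a matrix `B` whose centralizer has dimension `N` has a cyclic vector.
Indeed, by the structure theorem `k^N ≅ ⊕ k[X]/(q_l)` as a `k[X]`-module via `B`. If the `q_l`
are pairwise coprime, `(1, …, 1)` is annihilated only by multiples of `∏ q_l`, a polynomial of
degree `N`, so it is a cyclic vector. Otherwise some `q_i, q_j` (`i ≠ j`) have a common non-unit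
factor, which yields a nonzero map `k[X]/(q_i) → k[X]/(q_j)`; this endomorphism of `⊕ k[X]/(q_l)`
is not a multiplication, so `End_{k[X]}`, which embeds in `C(B)`, has dimension `> N`.

Lift a cyclic vector of `β̄` to `v`. The Krylov matrix `(v, βv, …, β^{N-1}v)` is invertible mod `𝔭`,
hence invertible, so every vector is `f(β) v` for some polynomial `f`. A matrix `A` commuting
with `β` is determined by `A v = f(β) v`, so `A = f(β) ∈ 𝔬_r[β]`, and `𝔬_r[β]` is commutative.
-/

open IsLocalRing

/-- Reduction mod the maximal ideal, `𝔬/𝔭^r → 𝔬/𝔭`. -/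
noncomputable def resRed (o : Type) [CommRing o] [IsLocalRing o] (r : ℕ) (hr : r ≠ 0) :
    (o ⧸ (maximalIdeal o) ^ r) →+* ResidueField o :=
  Ideal.Quotient.lift _ (IsLocalRing.residue o) fun a ha =>
    Ideal.Quotient.eq_zero_iff_mem.mpr (Ideal.pow_le_self hr ha)

open Module Polynomial Matrix

section CyclicVector

variable {k V : Type*} [Field k] [AddCommGroup V] [Module k V]

theorem Module.AEval'.isTorsion [FiniteDimensional k V] (φ : Module.End k V) :
    Module.IsTorsion k[X] (Module.AEval' φ) := by
  intro m
  refine ⟨⟨minpoly k φ, mem_nonZeroDivisors_of_ne_zero (minpoly.ne_zero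
    (Algebra.IsIntegral.isIntegral φ))⟩, ?_⟩
  obtain ⟨v, rfl⟩ := (Module.AEval'.of φ).surjective m
  show minpoly k φ • Module.AEval'.of φ v = 0
  rw [← Module.AEval.of_aeval_smul, minpoly.aeval, zero_smul, map_zero]

theorem Module.AEval'.commute_conj_restrictScalars (φ : Module.End k V)
    (ψ : Module.End k[X] (Module.AEval' φ)) :
    Commute φ ((Module.AEval'.of φ).symm.conj (ψ.restrictScalars k)) := by
  ext v
  show φ ((Module.AEval'.of φ).symm (ψ (Module.AEval'.of φ v))) =
    (Module.AEval'.of φ).symm (ψ (Module.AEval'.of φ (φ v)))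
  rw [← Module.AEval'.X_smul_of, map_smul, Module.AEval'.of_symm_X_smul]

noncomputable def Module.AEval'.endToCentralizer (φ : Module.End k V) :
    Module.End k[X] (Module.AEval' φ) →ₗ[k] Subalgebra.centralizer k {φ} :=
  LinearMap.codRestrict (Subalgebra.centralizer k {φ}).toSubmodule
    ((Module.AEval'.of φ).symm.conj.toLinearMap ∘ₗ LinearMap.restrictScalarsₗ k k[X] _ _ k)
    fun ψ => by
      rw [Subalgebra.mem_toSubmodule, Subalgebra.mem_centralizer_iff]
      rintro _ rfl
      exact Module.AEval'.commute_conj_restrictScalars _ ψ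

theorem Module.AEval'.endToCentralizer_injective (φ : Module.End k V) :
    Function.Injective (Module.AEval'.endToCentralizer φ) := fun _ _ h =>
  LinearMap.restrictScalars_injective k
    ((Module.AEval'.of φ).symm.conj.injective (congrArg Subtype.val h))

theorem Module.End.linearIndependent_pow_apply_of_le_natDegree (φ : Module.End k V) (v : V)
    (n : ℕ) (hv : ∀ f : k[X], f ≠ 0 → aeval φ f v = 0 → n ≤ f.natDegree) :
    LinearIndependent k (fun i : Fin n => (φ ^ (i : ℕ)) v) := by
  rw [Fintype.linearIndependent_iff]
  intro g hg
  set p := (degreeLTEquiv k n).symm g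
  have hp : aeval φ (p : k[X]) v = ∑ i, g i • (φ ^ (i : ℕ)) v := by
    simp [p, degreeLTEquiv, aeval_monomial, Module.End.mul_apply]
  suffices (p : k[X]) = 0 by
    have hg0 : g = 0 := by
      rw [← (degreeLTEquiv k n).apply_symm_apply g]
      exact (congrArg _ (Subtype.ext this : p = 0)).trans (map_zero _)
    exact congrFun hg0
  by_contra hp0
  have hdeg := mem_degreeLT.mp p.2
  have := hv _ hp0 (hp.trans hg)
  rw [degree_eq_natDegree hp0, Nat.cast_lt] at hdeg
  omega

end CyclicVector

theorem Pi.quotient_span_smul_one_eq_zero_iff {R ι : Type*} [CommRing R] (q : ι → R) (f : R) :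
    f • (1 : Π l, R ⧸ Ideal.span {q l}) = 0 ↔ ∀ l, q l ∣ f := by
  refine funext_iff.trans (forall_congr' fun l => ?_)
  rw [Pi.smul_apply, Pi.one_apply, Pi.zero_apply, Algebra.smul_def, mul_one,
    Ideal.Quotient.algebraMap_eq, Ideal.Quotient.eq_zero_iff_mem, Ideal.mem_span_singleton]

theorem exists_linearMap_quotient_span_apply_one_ne_zero {R : Type*} [CommRing R] [IsDomain R]
    {a b d : R} (hb : b ≠ 0) (hda : d ∣ a) (hdb : d ∣ b) (hd : ¬IsUnit d) :
    ∃ h : (R ⧸ Ideal.span {a}) →ₗ[R] R ⧸ Ideal.span {b}, h 1 ≠ 0 := by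
  obtain ⟨c, rfl⟩ := hdb
  obtain ⟨a', rfl⟩ := hda
  -- `1 ↦ c = b / d` is well defined because `b ∣ c * a`
  have hker : Ideal.span {d * a'} ≤ LinearMap.ker
      ((Ideal.Quotient.mkₐ R (Ideal.span {d * c})).toLinearMap ∘ₗ LinearMap.mulLeft R c) := by
    rw [Ideal.span_le, Set.singleton_subset_iff]
    change Ideal.Quotient.mk _ (c * (d * a')) = 0
    rw [Ideal.Quotient.eq_zero_iff_mem, Ideal.mem_span_singleton]
    exact ⟨a', by ring⟩
  refine ⟨Submodule.liftQ _ _ hker, ?_⟩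
  change Ideal.Quotient.mk _ (c * 1) ≠ 0
  rw [mul_one, Ne, Ideal.Quotient.eq_zero_iff_mem, Ideal.mem_span_singleton]
  rintro ⟨t, ht⟩
  have hc : c ≠ 0 := right_ne_zero_of_mul hb
  refine hd (IsUnit.of_mul_eq_one t (mul_left_cancel₀ hc ?_))
  linear_combination ht.symm

section PiQuotient

variable {R ι : Type*} [CommRing R] [DecidableEq ι] (I : ι → Ideal R)

theorem Pi.quotient_mul_ne_single_comp_proj {i j : ι} (hij : i ≠ j)
    (h : (R ⧸ I i) →ₗ[R] R ⧸ I j) (h1 : h 1 ≠ 0) (c : Π l, R ⧸ I l) :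
    LinearMap.mul R (Π l, R ⧸ I l) c ≠ LinearMap.single R _ j ∘ₗ h ∘ₗ LinearMap.proj i := by
  intro hc
  have hcj : c j = 0 := by
    simpa [Pi.single_apply, hij] using congrFun (LinearMap.congr_fun hc (Pi.single j 1)) j
  have hc1 : c j = h 1 := by
    simpa using congrFun (LinearMap.congr_fun hc 1) j
  exact h1 (hc1.symm.trans hcj)

theorem Pi.quotient_finrank_lt_finrank_end {k : Type*} [Field k] [Algebra k R]
    [Module.Finite k (Module.End R (Π l, R ⧸ I l))]
    {i j : ι} (hij : i ≠ j) (h : (R ⧸ I i) →ₗ[R] R ⧸ I j) (h1 : h 1 ≠ 0) :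
    finrank k (Π l, R ⧸ I l) < finrank k (Module.End R (Π l, R ⧸ I l)) := by
  set μ := (LinearMap.mul R (Π l, R ⧸ I l)).restrictScalars k
  have hμ : Function.Injective μ := fun c c' hcc' => by
    simpa [μ] using LinearMap.congr_fun hcc' 1
  calc finrank k (Π l, R ⧸ I l) = finrank k (LinearMap.range μ) :=
        (LinearMap.finrank_range_of_inj hμ).symm
    _ < _ := Submodule.finrank_lt fun htop => by
        obtain ⟨c, hc⟩ := (LinearMap.range_eq_top.mp htop)
          (LinearMap.single R _ j ∘ₗ h ∘ₗ LinearMap.proj i)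
        exact Pi.quotient_mul_ne_single_comp_proj I hij h h1 c hc

end PiQuotient

theorem Module.End.exists_linearIndependent_pow_apply_of_finrank_centralizer_le {k V : Type*}
    [Field k] [AddCommGroup V] [Module k V] [FiniteDimensional k V] (φ : Module.End k V)
    (hφ : finrank k (Subalgebra.centralizer k {φ}) ≤ finrank k V) :
    ∃ v : V, LinearIndependent k (fun i : Fin (finrank k V) => (φ ^ (i : ℕ)) v) := by
  classical
  obtain ⟨ι, _, p, hp, e, ⟨eDS⟩⟩ :=
    Module.equiv_directSum_of_isTorsion (Module.AEval'.isTorsion φ)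
  set q : ι → k[X] := fun l => p l ^ e l
  have hq : ∀ l, q l ≠ 0 := fun l => pow_ne_zero _ (hp l).ne_zero
  let eA : Module.AEval' φ ≃ₗ[k[X]] Π l, k[X] ⧸ Ideal.span {q l} :=
    eDS.trans (DirectSum.linearEquivFunOnFintype _ _ _)
  have : ∀ l, Module.Finite k (k[X] ⧸ Ideal.span {q l}) := fun l =>
    (AdjoinRoot.powerBasis (hq l)).finite
  have hdim : finrank k V = ∑ l, (q l).natDegree := by
    rw [(Module.AEval'.of φ).finrank_eq, (eA.restrictScalars k).finrank_eq,
      Module.finrank_pi_fintype]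
    simp only [finrank_quotient_span_eq_natDegree]
  by_cases hcop : Pairwise fun l l' => IsCoprime (q l) (q l')
  · refine ⟨(Module.AEval'.of φ).symm (eA.symm 1),
      φ.linearIndependent_pow_apply_of_le_natDegree _ _ fun f hf hfv => ?_⟩
    have hdvd : ∀ l, q l ∣ f := by
      rw [← Pi.quotient_span_smul_one_eq_zero_iff, ← eA.apply_symm_apply 1, ← map_smul,
        ← (Module.AEval'.of φ).apply_symm_apply (eA.symm 1), ← Module.AEval.of_aeval_smul,
        Module.End.smul_def, hfv, map_zero, map_zero]
    calc finrank k V = (∏ l, q l).natDegree := by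
          rw [hdim, natDegree_prod _ _ fun l _ => hq l]
      _ ≤ f.natDegree := natDegree_le_of_dvd
          (Finset.prod_dvd_of_coprime (fun l _ l' _ hll' => hcop hll') fun l _ => hdvd l) hf
  · exfalso
    obtain ⟨i, j, hij, hnc⟩ : ∃ i j, i ≠ j ∧ ¬IsCoprime (q i) (q j) := by
      simpa [Pairwise] using hcop
    obtain ⟨d, hdi, hdj, hd⟩ : ∃ d, d ∣ q i ∧ d ∣ q j ∧ ¬IsUnit d := by
      simpa [← isRelPrime_iff_isCoprime, IsRelPrime] using hnc
    obtain ⟨h, h1⟩ := exists_linearMap_quotient_span_apply_one_ne_zero (hq j) hdi hdj hd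
    have hinj := Module.AEval'.endToCentralizer_injective φ
    have : Module.Finite k (Module.End k[X] (Module.AEval' φ)) := Module.Finite.of_injective _ hinj
    have eEnd := (eA.conjAlgEquiv k).toLinearEquiv
    have : Module.Finite k (Module.End k[X] (Π l, k[X] ⧸ Ideal.span {q l})) :=
      Module.Finite.equiv eEnd
    have hlt := Pi.quotient_finrank_lt_finrank_end (k := k) (fun l => Ideal.span {q l}) hij h h1
    rw [← eEnd.finrank_eq, ← (eA.restrictScalars k).finrank_eq,
      ← (Module.AEval'.of φ).finrank_eq] at hlt
    have hle := LinearMap.finrank_le_finrank_of_injective hinj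
    omega

theorem Subalgebra.finrank_centralizer_singleton_algEquiv {R A B : Type*} [CommRing R] [Ring A]
    [Ring B] [Algebra R A] [Algebra R B] (e : A ≃ₐ[R] B) (a : A) :
    finrank R (Subalgebra.centralizer R {e a}) = finrank R (Subalgebra.centralizer R {a}) := by
  have hmap : (Subalgebra.centralizer R {a}).map (e : A →ₐ[R] B) =
      Subalgebra.centralizer R {e a} := by
    ext x
    simp only [Subalgebra.mem_map, Subalgebra.mem_centralizer_iff, Set.mem_singleton_iff,
      forall_eq]
    constructor
    · rintro ⟨y, hy, rfl⟩
      change e a * e y = e y * e a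
      rw [← map_mul, ← map_mul, hy]
    · intro hx
      exact ⟨e.symm x, e.injective (by simpa using hx), e.apply_symm_apply x⟩
  rw [← hmap]
  exact (e.subalgebraMap _).toLinearEquiv.finrank_eq.symm

theorem Matrix.exists_linearIndependent_pow_mulVec_of_finrank_centralizer_le {k : Type*} [Field k]
    {N : ℕ} (B : Matrix (Fin N) (Fin N) k)
    (hB : finrank k (Subalgebra.centralizer k {B}) ≤ N) :
    ∃ v : Fin N → k, LinearIndependent k (fun i : Fin N => B ^ (i : ℕ) *ᵥ v) := by
  have h := Module.End.exists_linearIndependent_pow_apply_of_finrank_centralizer_le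
    (toLinAlgEquiv' B) (by rwa [Subalgebra.finrank_centralizer_singleton_algEquiv, finrank_fin_fun])
  rw [finrank_fin_fun] at h
  simpa only [← map_pow, toLinAlgEquiv'_apply] using h

instance RingHom.isLocalHom_mapMatrix {n R S : Type*} [Fintype n] [DecidableEq n] [CommRing R]
    [CommRing S] (f : R →+* S) [IsLocalHom f] :
    IsLocalHom (f.mapMatrix : Matrix n n R →+* Matrix n n S) where
  map_nonunit M hM := by
    rw [isUnit_iff_isUnit_det, ← RingHom.map_det] at hM
    exact (isUnit_iff_isUnit_det M).mpr (hM.of_map f _)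

section Krylov

variable {R : Type*} [CommRing R] {N : ℕ}

def Matrix.krylov (β : Matrix (Fin N) (Fin N) R) (v : Fin N → R) : Matrix (Fin N) (Fin N) R :=
  Matrix.of fun x i => (β ^ (i : ℕ) *ᵥ v) x

theorem RingHom.mapMatrix_krylov {S : Type*} [CommRing S] (f : R →+* S)
    (β : Matrix (Fin N) (Fin N) R) (v : Fin N → R) :
    f.mapMatrix (krylov β v) = krylov (f.mapMatrix β) (f ∘ v) := by
  ext x i
  simp only [krylov, RingHom.mapMatrix_apply, map_apply, of_apply, RingHom.map_mulVec]
  rw [← RingHom.mapMatrix_apply, map_pow, RingHom.mapMatrix_apply]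

theorem Matrix.exists_aeval_mulVec_eq_of_isUnit_krylov {β : Matrix (Fin N) (Fin N) R}
    {v : Fin N → R} (h : IsUnit (krylov β v)) (w : Fin N → R) :
    ∃ f : R[X], aeval β f *ᵥ v = w := by
  obtain ⟨c, rfl⟩ := mulVec_surjective_iff_isUnit.mpr h w
  refine ⟨∑ i : Fin N, monomial (i : ℕ) (c i), ?_⟩
  rw [map_sum, sum_mulVec, mulVec_eq_sum]
  refine Finset.sum_congr rfl fun i _ => ?_
  ext x
  simp [krylov, aeval_monomial, ← Algebra.smul_def, smul_mulVec, mul_comm]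

end Krylov

theorem Matrix.mem_adjoin_singleton_of_commute {R n : Type*} [CommRing R] [Fintype n]
    [DecidableEq n] {β A : Matrix n n R} {v : n → R} (hv : ∀ w, ∃ f : R[X], aeval β f *ᵥ v = w)
    (hA : Commute A β) : A ∈ Algebra.adjoin R {β} := by
  obtain ⟨f, hf⟩ := hv (A *ᵥ v)
  suffices A = aeval β f by
    rw [this, Algebra.adjoin_singleton_eq_range_aeval]
    exact ⟨f, rfl⟩
  have hcomm : ∀ g : R[X], Commute A (aeval β g) := fun g =>
    Algebra.commute_of_mem_adjoin_singleton_of_commute (aeval_mem_adjoin_singleton R β) hA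
  refine toLin'.injective (LinearMap.ext fun w => ?_)
  obtain ⟨g, rfl⟩ := hv w
  rw [toLin'_apply, toLin'_apply]
  calc A *ᵥ (aeval β g *ᵥ v) = aeval β g *ᵥ (A *ᵥ v) := by
        rw [mulVec_mulVec, (hcomm g).eq, ← mulVec_mulVec]
    _ = aeval β f *ᵥ (aeval β g *ᵥ v) := by
        rw [← hf, mulVec_mulVec, mulVec_mulVec, ← map_mul, ← map_mul, mul_comm]

instance isLocalHom_resRed (o : Type) [CommRing o] [IsLocalRing o] (r : ℕ) (hr : r ≠ 0) :
    IsLocalHom (resRed o r hr) where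
  map_nonunit a ha := by
    obtain ⟨x, rfl⟩ := Ideal.Quotient.mk_surjective a
    exact (IsUnit.of_map (residue o) x ha).map _

theorem resRed_surjective (o : Type) [CommRing o] [IsLocalRing o] (r : ℕ) (hr : r ≠ 0) :
    Function.Surjective (resRed o r hr) :=
  Ideal.Quotient.lift_surjective_of_surjective _ _ residue_surjective

/-- If `β ∈ M_N(𝔬_r)` is regular then the centralizer of `β` in `GL_N(𝔬_r)` is the
unit group of the subring `𝔬_r[β]`; in particular it is abelian. -/
theorem centralizer_of_regular_eq_units_adjoin
    (o : Type) [CommRing o] [IsDomain o] [IsDiscreteValuationRing o]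
    (N r : ℕ) (hr : 2 ≤ r)
    (β : Matrix (Fin N) (Fin N) (o ⧸ (maximalIdeal o) ^ r))
    (hreg : Module.finrank (ResidueField o)
      ↥(Subalgebra.centralizer (ResidueField o)
        ({(resRed o r (by omega)).mapMatrix β} :
          Set (Matrix (Fin N) (Fin N) (ResidueField o)))) = N) :
    (∀ g : GL (Fin N) (o ⧸ (maximalIdeal o) ^ r),
      Commute (g : Matrix (Fin N) (Fin N) (o ⧸ (maximalIdeal o) ^ r)) β ↔
        (g : Matrix (Fin N) (Fin N) (o ⧸ (maximalIdeal o) ^ r)) ∈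
          Algebra.adjoin (o ⧸ (maximalIdeal o) ^ r) ({β} : Set _)) ∧
    ∀ g h : GL (Fin N) (o ⧸ (maximalIdeal o) ^ r),
      Commute (g : Matrix (Fin N) (Fin N) (o ⧸ (maximalIdeal o) ^ r)) β →
      Commute (h : Matrix (Fin N) (Fin N) (o ⧸ (maximalIdeal o) ^ r)) β →
      Commute g h := by
  have hr0 : r ≠ 0 := by omega
  obtain ⟨v₀, hv₀⟩ :=
    ((resRed o r hr0).mapMatrix β).exists_linearIndependent_pow_mulVec_of_finrank_centralizer_le
      hreg.le
  obtain ⟨v, rfl⟩ := (resRed_surjective o r hr0).comp_left v₀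
  have hkrylov : IsUnit (krylov β v) := by
    refine IsUnit.of_map (resRed o r hr0).mapMatrix _ ?_
    rw [RingHom.mapMatrix_krylov, ← linearIndependent_cols_iff_isUnit]
    exact hv₀
  have hcomm : ∀ A, Commute A β ↔ A ∈ Algebra.adjoin _ {β} := fun A =>
    ⟨mem_adjoin_singleton_of_commute (exists_aeval_mulVec_eq_of_isUnit_krylov hkrylov),
      fun hA => (Algebra.commute_of_mem_adjoin_self hA).symm⟩
  exact ⟨fun g => hcomm g, fun g h hg hh => Commute.units_val_iff.mp
    (Algebra.commute_of_mem_adjoin_singleton_of_commute ((hcomm h).mp hh) hg)⟩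
end

section
/- (Howe) Let V be a finite-dimensional F_p-vector space equipped with an alternating bilinear form α, and let P be a finite p-group acting linearly on V preserving α. Then there exists a maximal isotropic subspace U of V which is P-invariant. -/
/-!
Among the `P`-invariant isotropic subspaces choose a maximal one `U`. If `U ≠ U^⊥`, then
`U^⊥ / U` is a nonzero `F_p`-representation of the `p`-group `P`, so it has a nonzero fixed
vector, since the number of fixed vectors is `≡ |U^⊥ / U| ≡ 0 (mod p)` and `0` is one of them.
A lift `v ∈ U^⊥` of it satisfies `g v - v ∈ U`, so `U + F_p v` is again invariant, and it is
isotropic because `α v v = 0`; this contradicts maximality.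
-/

namespace Representation

section PGroup

variable {p : ℕ} [Fact p.Prime] {G W : Type*} [Group G] [AddCommGroup W] [Module (ZMod p) W]
  [Module.Finite (ZMod p) W]

theorem exists_fixed_ne_zero_of_isPGroup (hG : IsPGroup p G) (ρ : Representation (ZMod p) G W)
    {N : Submodule (ZMod p) W} (hN : ∀ g, N ≤ N.comap (ρ g)) (hN0 : N ≠ ⊥) :
    ∃ w ∈ N, w ≠ 0 ∧ ∀ g, ρ g w = w := by
  let : MulAction G N := MulAction.compHom N (ρ.subrepresentation N hN)
  have : Finite W := Module.finite_of_finite (ZMod p)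
  have hcard : p ∣ Nat.card N := by
    have : 0 < Module.finrank (ZMod p) N :=
      Module.finrank_pos_iff.2 (Submodule.nontrivial_iff_ne_bot.2 hN0)
    rw [Module.natCard_eq_pow_finrank (K := ZMod p), Nat.card_zmod]
    exact dvd_pow_self p this.ne'
  have hzero : (0 : N) ∈ MulAction.fixedPoints G N := fun g =>
    map_zero (ρ.subrepresentation N hN g)
  obtain ⟨w, hw, hw0⟩ := hG.exists_fixed_point_of_prime_dvd_card_of_fixed_point N hcard hzero
  exact ⟨w, w.2, fun h => hw0 (Subtype.ext h.symm), fun g => congrArg Subtype.val (hw g)⟩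

theorem exists_notMem_sub_mem_of_lt (hG : IsPGroup p G) (ρ : Representation (ZMod p) G W)
    {U N : Submodule (ZMod p) W} (hU : ∀ g, U ≤ U.comap (ρ g)) (hN : ∀ g, N ≤ N.comap (ρ g))
    (hUN : U < N) : ∃ v ∈ N, v ∉ U ∧ ∀ g, ρ g v - v ∈ U := by
  have hNU : ∀ g, N.map U.mkQ ≤ (N.map U.mkQ).comap (ρ.quotient U hU g) := by
    rintro g _ ⟨v, hv, rfl⟩
    exact ⟨ρ g v, hN g hv, rfl⟩
  have hNU0 : N.map U.mkQ ≠ ⊥ := by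
    rw [ne_eq, ← LinearMap.le_ker_iff_map, Submodule.ker_mkQ]
    exact hUN.not_ge
  obtain ⟨_, ⟨v, hv, rfl⟩, hv0, hfix⟩ := exists_fixed_ne_zero_of_isPGroup hG _ hNU hNU0
  refine ⟨v, hv, fun h => hv0 ((Submodule.Quotient.mk_eq_zero U).2 h), fun g => ?_⟩
  exact (Submodule.Quotient.eq U).1 (hfix g)

end PGroup

theorem sup_span_singleton_le_comap {R M G : Type*} [CommRing R] [AddCommGroup M] [Module R M]
    [Monoid G] (ρ : Representation R G M) {U : Submodule R M} (hU : ∀ g, U ≤ U.comap (ρ g))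
    {v : M} (hv : ∀ g, ρ g v - v ∈ U) (g : G) :
    U ⊔ R ∙ v ≤ (U ⊔ R ∙ v).comap (ρ g) := by
  refine sup_le (hU g |>.trans (Submodule.comap_mono le_sup_left)) ?_
  rw [Submodule.span_singleton_le_iff_mem, Submodule.mem_comap]
  rw [← sub_add_cancel (ρ g v) v]
  exact Submodule.add_mem_sup (hv g) (Submodule.mem_span_singleton_self v)

theorem orthogonalBilin_le_comap {R M G : Type*} [CommRing R] [AddCommGroup M] [Module R M]
    [Group G] (ρ : Representation R G M) {B : M →ₗ[R] M →ₗ[R] R}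
    (hB : ∀ g v w, B (ρ g v) (ρ g w) = B v w) {U : Submodule R M}
    (hU : ∀ g, U ≤ U.comap (ρ g)) (g : G) :
    U.orthogonalBilin B ≤ (U.orthogonalBilin B).comap (ρ g) := by
  intro m hm n hn
  rw [← ρ.self_inv_apply g n, hB]
  exact hm _ (hU g⁻¹ hn)

end Representation

namespace LinearMap.IsAlt

theorem sup_span_singleton_le_orthogonalBilin {R M : Type*} [CommRing R] [AddCommGroup M]
    [Module R M] {B : M →ₗ[R] M →ₗ[R] R} (hB : B.IsAlt) {U : Submodule R M}
    (hU : U ≤ U.orthogonalBilin B) {v : M} (hv : v ∈ U.orthogonalBilin B) :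
    U ⊔ R ∙ v ≤ (U ⊔ R ∙ v).orthogonalBilin B := by
  intro x hx y hy
  obtain ⟨u, hu, _, hav, rfl⟩ := Submodule.mem_sup.1 hx
  obtain ⟨a, rfl⟩ := Submodule.mem_span_singleton.1 hav
  obtain ⟨u', hu', _, hbv, rfl⟩ := Submodule.mem_sup.1 hy
  obtain ⟨b, rfl⟩ := Submodule.mem_span_singleton.1 hbv
  simp [hU hu u' hu', hv u' hu', hB.isRefl _ _ (hv u hu), hB.self_eq_zero]

end LinearMap.IsAlt

theorem exists_invariant_maximal_isotropic_general
    (p : ℕ) [Fact p.Prime] (V : Type) [AddCommGroup V] [Module (ZMod p) V]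
    [FiniteDimensional (ZMod p) V]
    (α : V →ₗ[ZMod p] V →ₗ[ZMod p] ZMod p) (halt : ∀ v, α v v = 0)
    (P : Type) [Group P] (hP : IsPGroup p P)
    (ρ : P →* (V ≃ₗ[ZMod p] V))
    (hpres : ∀ (g : P) (v w : V), α (ρ g v) (ρ g w) = α v w) :
    ∃ U : Submodule (ZMod p) V,
      (∀ u ∈ U, ∀ w ∈ U, α u w = 0) ∧
      (∀ v : V, (∀ u ∈ U, α v u = 0) → v ∈ U) ∧
      ∀ (g : P), ∀ u ∈ U, ρ g u ∈ U := by
  let ρV : Representation (ZMod p) P V :=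
    LinearEquiv.automorphismGroup.toLinearMapMonoidHom.comp ρ
  have hα : α.IsAlt := halt
  have : Finite V := Module.finite_of_finite (ZMod p)
  obtain ⟨U, ⟨hUiso, hUinv⟩, hUmax⟩ := Set.Finite.exists_maximal
    (Set.toFinite {U : Submodule (ZMod p) V | U ≤ U.orthogonalBilin α ∧ ∀ g, U ≤ U.comap (ρV g)})
    ⟨⊥, bot_le, fun _ => bot_le⟩
  refine ⟨U, fun u hu w hw => hUiso hw u hu, fun v hv => ?_, hUinv⟩
  by_contra hvU
  have hlt : U < U.orthogonalBilin α :=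
    lt_of_le_of_ne hUiso fun h => hvU (h ▸ fun u hu => hα.isRefl _ _ (hv u hu))
  obtain ⟨w, hw, hwU, hfix⟩ :=
    ρV.exists_notMem_sub_mem_of_lt hP hUinv (ρV.orthogonalBilin_le_comap hpres hUinv) hlt
  have hU' := hUmax ⟨hα.sup_span_singleton_le_orthogonalBilin hUiso hw,
    ρV.sup_span_singleton_le_comap hUinv hfix⟩ le_sup_left
  exact hwU (hU' (Submodule.mem_sup_right (Submodule.mem_span_singleton_self w)))

/-- (Howe) Let `V` be a finite-dimensional `F_p`-vector space with an alternating
bilinear form `α`, and let `P` be a finite `p`-group acting linearly on `V`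
preserving `α`. Then there is a `P`-invariant maximal isotropic subspace of `V`. -/
theorem exists_invariant_maximal_isotropic
    (p : ℕ) [Fact p.Prime] (V : Type) [AddCommGroup V] [Module (ZMod p) V]
    [FiniteDimensional (ZMod p) V]
    (α : V →ₗ[ZMod p] V →ₗ[ZMod p] ZMod p) (halt : ∀ v, α v v = 0)
    (P : Type) [Group P] [Finite P] (hP : IsPGroup p P)
    (ρ : P →* (V ≃ₗ[ZMod p] V))
    (hpres : ∀ (g : P) (v w : V), α (ρ g v) (ρ g w) = α v w) :
    ∃ U : Submodule (ZMod p) V,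
      (∀ u ∈ U, ∀ w ∈ U, α u w = 0) ∧
      (∀ v : V, (∀ u ∈ U, α v u = 0) → v ∈ U) ∧
      ∀ (g : P), ∀ u ∈ U, ρ g u ∈ U :=
  exists_invariant_maximal_isotropic_general p V α halt P hP ρ hpres
end
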